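/- In Weispfenning's example with parameters u, v and variables x, y, z, lexicographic monomial order with z > y > x, let f = u·y + x, g = v·z + x + 1, h = v·z − u·y + 1 in P and I = Ideal.span {f, g}. Then {f, h} is NOT a comprehensive Gröbner basis of I: for the parameter assignment v̄ sending u ↦ 1 and v ↦ 0, σ_{v̄}(g) = x + 1 is a nonzero element of Ideal.map σ_{v̄} I with leading monomial x, while σ_{v̄}(f) = y + x and σ_{v̄}(h) = −y + 1 both have leading monomial y, which does not divide x. Hence g is essential in the CGB {f, g, h}, and combined with the essentiality of f and h, {f, g, h} is a minimal CGB of I. -/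

import Mathlib

open MvPolynomial

/-- The leading monomial (`m.degree`) of a multivariate polynomial w.r.t. a monomial order. -/
noncomputable def mdeg {σ R : Type*} [CommSemiring R] (m : MonomialOrder σ)
    (p : MvPolynomial σ R) : σ →₀ ℕ :=
  m.toSyn.symm (p.support.sup fun s => m.toSyn s)

/-- `H` is a Gröbner basis of the ideal `J`. -/
def IsGroebnerBasis {σ F : Type*} [Field F] (m : MonomialOrder σ)
    (J : Ideal (MvPolynomial σ F)) (H : Set (MvPolynomial σ F)) : Prop :=
  H ⊆ (J : Set (MvPolynomial σ F)) ∧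
    ∀ p ∈ J, p ≠ 0 → ∃ h ∈ H, h ≠ 0 ∧ mdeg m h ≤ mdeg m p

/-- Specialization of the parameters at `v : U → L`. -/
noncomputable def paramSpec {K L U X : Type*} [CommSemiring K] [CommSemiring L]
    [Algebra K L] (v : U → L) :
    MvPolynomial X (MvPolynomial U K) →+* MvPolynomial X L :=
  MvPolynomial.map ((MvPolynomial.aeval v : MvPolynomial U K →ₐ[K] L) : MvPolynomial U K →+* L)

/-- `G` is a comprehensive Gröbner basis of `I` on the set `A` of parameter assignments. -/
def IsCGBOn {K U X : Type*} (L : Type*) [Field K] [Field L] [Algebra K L]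
    (m : MonomialOrder X) (I : Ideal (MvPolynomial X (MvPolynomial U K)))
    (A : Set (U → L)) (G : Set (MvPolynomial X (MvPolynomial U K))) : Prop :=
  G.Finite ∧ G ⊆ (I : Set (MvPolynomial X (MvPolynomial U K))) ∧
    ∀ v ∈ A, IsGroebnerBasis m (I.map (paramSpec (L := L) v))
      (paramSpec (L := L) v '' G)

/-- `G` is a comprehensive Gröbner basis of `I`. -/
def IsCGB {K U X : Type*} (L : Type*) [Field K] [Field L] [Algebra K L]
    (m : MonomialOrder X) (I : Ideal (MvPolynomial X (MvPolynomial U K)))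
    (G : Set (MvPolynomial X (MvPolynomial U K))) : Prop :=
  G.Finite ∧ G ⊆ (I : Set (MvPolynomial X (MvPolynomial U K))) ∧
    ∀ v : U → L, IsGroebnerBasis m (I.map (paramSpec (L := L) v))
      (paramSpec (L := L) v '' G)

namespace Weispfenning

/-- Variables: `z = X 0 > y = X 1 > x = X 2` under the lexicographic order. -/
noncomputable abbrev m3 : MonomialOrder (Fin 3) := MonomialOrder.lex

variable (K : Type*) [Field K]

/-- `f = u·y + x`. -/
noncomputable def f : MvPolynomial (Fin 3) (MvPolynomial (Fin 2) K) :=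
  MvPolynomial.C (MvPolynomial.X 0) * MvPolynomial.X 1 + MvPolynomial.X 2

/-- `g = v·z + x + 1`. -/
noncomputable def g : MvPolynomial (Fin 3) (MvPolynomial (Fin 2) K) :=
  MvPolynomial.C (MvPolynomial.X 1) * MvPolynomial.X 0 + MvPolynomial.X 2 + 1

/-- `h = v·z - u·y + 1`. -/
noncomputable def h : MvPolynomial (Fin 3) (MvPolynomial (Fin 2) K) :=
  MvPolynomial.C (MvPolynomial.X 1) * MvPolynomial.X 0
    - MvPolynomial.C (MvPolynomial.X 0) * MvPolynomial.X 1 + 1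

/-- `I = ⟨f, g⟩`. -/
noncomputable def I : Ideal (MvPolynomial (Fin 3) (MvPolynomial (Fin 2) K)) :=
  Ideal.span {f K, g K}

end Weispfenning

/-! When `(u, v) ↦ (a, b)`, the specialized ideal is `⟨a y + x, b z + x + 1⟩` and
`σ(h) = σ(g) - σ(f)`. If `a = b = 0` then `σ(h) = 1`. Otherwise the leading monomials of `σ(f)`
and `σ(g)` are two distinct variables, and for the third variable `w` there is a substitution
`L[x, y, z] → L[T]` with `w ↦ T`, sending the variables below `w` to constants, that kills the
ideal. Since a polynomial whose lex leading monomial is `w ^ k` involves no variable above `w`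
and contains `w ^ k` only in its leading term, its leading coefficient survives as the
`T ^ k`-coefficient of its image; so no nonzero element of the ideal has such a leading monomial.

For minimality, at `(a, b) = (1, 0)`, `(0, 1)`, `(0, 0)` the leading monomial of `σ(g)`, `σ(f)`,
`σ(h)` respectively (`x`, `x`, `1`) is divisible by none of the other two. -/

open Finsupp MonomialOrder

theorem Finsupp.toLex_lt_toLex_single_iff {σ : Type*} [LinearOrder σ] {e : σ →₀ ℕ} {i : σ}
    {k : ℕ} : toLex e < toLex (single i k) ↔ (∀ j < i, e j = 0) ∧ e i < k := by
  rw [Lex.lt_iff]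
  constructor
  · rintro ⟨l, hlt, hl⟩
    simp only [ofLex_toLex] at hlt hl
    obtain rfl : l = i := by
      by_contra h
      simp [Ne.symm h] at hl
    exact ⟨fun j hj => by simpa [single_apply, hj.ne'] using hlt j hj, by simpa using hl⟩
  · rintro ⟨hlt, hi⟩
    exact ⟨i, fun j hj => by simpa [single_apply, hj.ne'] using hlt j hj, by simpa using hi⟩

theorem MonomialOrder.degree_C_mul_X_add {σ R : Type*} [CommSemiring R] {m : MonomialOrder σ}
    {a : R} (ha : a ≠ 0) (i : σ) {q : MvPolynomial σ R} (hq : m.degree q ≺[m] single i 1) :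
    m.degree (C a * X i + q) = single i 1 := by
  classical
  have hdeg : m.degree (C a * X i) = single i 1 := by
    rw [C_mul_X_eq_monomial, degree_monomial, if_neg ha]
  rw [degree_add_of_lt (hdeg ▸ hq), hdeg]

theorem MonomialOrder.degree_X_add_one {σ R : Type*} [CommSemiring R] [Nontrivial R]
    {m : MonomialOrder σ} (i : σ) : m.degree (X i + 1 : MvPolynomial σ R) = single i 1 := by
  rw [degree_add_of_lt] <;> simp [degree_X, toSyn_lt_iff_ne_zero]

namespace MvPolynomial

variable {σ : Type*} [LinearOrder σ] [WellFoundedGT σ]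

-- Under `MonomialOrder.lex`, `X j` lies below `X i` exactly when `i < j`.
theorem coeff_aeval_eq_coeff_of_lex_degree_eq_single {R : Type*} [CommSemiring R]
    {p : MvPolynomial σ R} {i : σ} {k : ℕ} (hp : MonomialOrder.lex.degree p = single i k)
    {x : σ → Polynomial R} (hi : x i = Polynomial.X)
    (hx : ∀ j, i < j → ∃ c, x j = Polynomial.C c) :
    (aeval x p).coeff k = p.coeff (single i k) := by
  classical
  have hmonomial : ∀ e ∈ p.support, (aeval x (monomial e (p.coeff e))).coeff k =
      if e = single i k then p.coeff e else 0 := by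
    intro e he
    have hle : toLex e ≤ toLex (single i k) := hp ▸ MonomialOrder.le_degree (m := .lex) he
    rcases hle.eq_or_lt with heq | hlt
    · obtain rfl : e = single i k := toLex.injective heq
      simp [aeval_monomial, hi]
    obtain ⟨hzero, hlt⟩ := toLex_lt_toLex_single_iff.1 hlt
    have hconst : (e.erase i).prod (fun j n => x j ^ n) ∈ (Polynomial.C : R →+* _).rangeS := by
      refine prod_mem fun j hj => pow_mem ?_ _
      rw [support_erase, Finset.mem_erase, Finsupp.mem_support_iff] at hj
      obtain ⟨c, hc⟩ := hx j (lt_of_le_of_ne (not_lt.1 fun hji => hj.2 (hzero j hji)) hj.1.symm)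
      exact ⟨c, hc.symm⟩
    obtain ⟨r, hr⟩ := hconst
    rw [aeval_monomial, ← mul_prod_erase' e i _ (fun _ => pow_zero _), hi, ← hr,
      if_neg (fun h => hlt.ne (by simp [h])), Polynomial.algebraMap_eq,
      mul_comm _ (Polynomial.C r), ← mul_assoc, ← Polynomial.C_mul,
      Polynomial.coeff_C_mul_X_pow, if_neg hlt.ne']
  conv_lhs => rw [p.as_sum, map_sum, Polynomial.finsetSum_coeff, Finset.sum_congr rfl hmonomial]
  rw [Finset.sum_ite_eq']
  split_ifs with h
  · rfl
  · exact (notMem_support_iff.1 h).symm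

theorem exists_ne_lex_degree_ne_zero_of_aeval_eq_zero {R : Type*} [CommSemiring R]
    {p : MvPolynomial σ R} (hp : p ≠ 0) {i : σ} {x : σ → Polynomial R}
    (hi : x i = Polynomial.X) (hx : ∀ j, i < j → ∃ c, x j = Polynomial.C c)
    (h : aeval x p = 0) : ∃ j ≠ i, MonomialOrder.lex.degree p j ≠ 0 := by
  by_contra! hne
  have hd : MonomialOrder.lex.degree p = single i (MonomialOrder.lex.degree p i) := by
    ext j
    by_cases hj : j = i
    · simp [hj]
    · simp [hne j hj, Ne.symm hj]
  have := coeff_aeval_eq_coeff_of_lex_degree_eq_single hd hi hx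
  rw [h, Polynomial.coeff_zero, ← hd] at this
  exact coeff_degree_ne_zero_iff.2 hp this.symm

end MvPolynomial

theorem mdeg_eq_degree {σ R : Type*} [CommSemiring R] (m : MonomialOrder σ)
    (p : MvPolynomial σ R) : mdeg m p = m.degree p := rfl

theorem isGroebnerBasis_of_one_mem {σ F : Type*} [Field F] {m : MonomialOrder σ}
    {J : Ideal (MvPolynomial σ F)} {H : Set (MvPolynomial σ F)} (hH : H ⊆ J) (h1 : 1 ∈ H) :
    IsGroebnerBasis m J H :=
  ⟨hH, fun _ _ _ => ⟨1, h1, one_ne_zero, by simp [mdeg_eq_degree]⟩⟩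

theorem isGroebnerBasis_lex_of_le_ker_aeval {σ F : Type*} [LinearOrder σ] [WellFoundedGT σ]
    [Field F] {J : Ideal (MvPolynomial σ F)} {H : Set (MvPolynomial σ F)} (hH : H ⊆ J)
    {i : σ} {x : σ → Polynomial F} (hi : x i = Polynomial.X)
    (hx : ∀ j, i < j → ∃ c, x j = Polynomial.C c) (hJ : J ≤ RingHom.ker (aeval x))
    (hcover : ∀ j ≠ i, ∃ q ∈ H, MonomialOrder.lex.degree q = single j 1) :
    IsGroebnerBasis .lex J H := by
  refine ⟨hH, fun p hp hp0 => ?_⟩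
  obtain ⟨j, hji, hj⟩ := exists_ne_lex_degree_ne_zero_of_aeval_eq_zero hp0 hi hx (hJ hp)
  obtain ⟨q, hq, hdeg⟩ := hcover j hji
  refine ⟨q, hq, ne_zero_of_degree_ne_zero (m := .lex) (by simp [hdeg]), ?_⟩
  rw [mdeg_eq_degree, mdeg_eq_degree, hdeg, single_le_iff]
  omega

theorem not_isCGB_of_forall_not_degree_le {K U X L : Type*} [Field K] [Field L] [Algebra K L]
    {m : MonomialOrder X} {I : Ideal (MvPolynomial X (MvPolynomial U K))}
    {G : Set (MvPolynomial X (MvPolynomial U K))} {p : MvPolynomial X (MvPolynomial U K)}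
    (hp : p ∈ I) (v : U → L) (hp0 : paramSpec v p ≠ 0)
    (hG : ∀ q ∈ G, ¬ m.degree (paramSpec v q) ≤ m.degree (paramSpec v p)) :
    ¬ IsCGB L m I G := by
  rintro ⟨-, -, hGB⟩
  obtain ⟨_, ⟨q, hq, rfl⟩, -, hle⟩ := (hGB v).2 _ (Ideal.mem_map_of_mem _ hp) hp0
  exact hG q hq hle

namespace Weispfenning

variable {K L : Type*} [Field K] [Field L] [Algebra K L]

theorem paramSpec_f (v : Fin 2 → L) : paramSpec v (f K) = C (v 0) * X 1 + X 2 := by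
  simp [f, paramSpec]

theorem paramSpec_g (v : Fin 2 → L) : paramSpec v (g K) = C (v 1) * X 0 + X 2 + 1 := by
  simp [g, paramSpec]

theorem h_eq_g_sub_f : h K = g K - f K := by
  rw [h, g, f]
  ring

theorem paramSpec_h (v : Fin 2 → L) :
    paramSpec v (h K) = paramSpec v (g K) - paramSpec v (f K) := by
  rw [h_eq_g_sub_f, map_sub]

theorem f_mem_I : f K ∈ I K := Ideal.subset_span (by simp)

theorem g_mem_I : g K ∈ I K := Ideal.subset_span (by simp)

theorem h_mem_I : h K ∈ I K := h_eq_g_sub_f (K := K) ▸ sub_mem g_mem_I f_mem_I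

theorem fgh_subset_I :
    {f K, g K, h K} ⊆ (I K : Set (MvPolynomial (Fin 3) (MvPolynomial (Fin 2) K))) := by
  rintro _ (rfl | rfl | rfl)
  exacts [f_mem_I, g_mem_I, h_mem_I]

theorem map_paramSpec_I_le_ker_aeval {v : Fin 2 → L} {x : Fin 3 → Polynomial L}
    (hf : aeval x (paramSpec v (f K)) = 0) (hg : aeval x (paramSpec v (g K)) = 0) :
    (I K).map (paramSpec v) ≤ RingHom.ker (aeval x) := by
  rw [I, Ideal.map_span, Set.image_pair]
  exact Ideal.span_le.2 (Set.pair_subset hf hg)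

theorem degree_paramSpec_f {v : Fin 2 → L} (hv : v 0 ≠ 0) :
    m3.degree (paramSpec v (f K)) = single 1 1 := by
  rw [paramSpec_f, degree_C_mul_X_add hv]
  rw [degree_X]
  exact Lex.single_lt_iff.2 (by decide)

theorem degree_paramSpec_f_of_eq_zero {v : Fin 2 → L} (hv : v 0 = 0) :
    m3.degree (paramSpec v (f K)) = single 2 1 := by
  simp [paramSpec_f, hv, degree_X]

theorem degree_paramSpec_g {v : Fin 2 → L} (hv : v 1 ≠ 0) :
    m3.degree (paramSpec v (g K)) = single 0 1 := by
  rw [paramSpec_g, add_assoc, degree_C_mul_X_add hv]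
  rw [degree_X_add_one]
  exact Lex.single_lt_iff.2 (by decide)

theorem degree_paramSpec_g_of_eq_zero {v : Fin 2 → L} (hv : v 1 = 0) :
    m3.degree (paramSpec v (g K)) = single 2 1 := by
  simp [paramSpec_g, hv, degree_X_add_one]

theorem degree_paramSpec_h {v : Fin 2 → L} (hv : v 1 ≠ 0) :
    m3.degree (paramSpec v (h K)) = single 0 1 := by
  rw [paramSpec_h, degree_sub_of_lt, degree_paramSpec_g hv]
  rw [degree_paramSpec_g hv]
  by_cases hv0 : v 0 = 0
  · rw [degree_paramSpec_f_of_eq_zero hv0]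
    exact Lex.single_lt_iff.2 (by decide)
  · rw [degree_paramSpec_f hv0]
    exact Lex.single_lt_iff.2 (by decide)

theorem degree_paramSpec_h_of_eq_zero {v : Fin 2 → L} (hv0 : v 0 ≠ 0) (hv1 : v 1 = 0) :
    m3.degree (paramSpec v (h K)) = single 1 1 := by
  rw [paramSpec_h, sub_eq_add_neg, degree_add_eq_right_of_lt, degree_neg, degree_paramSpec_f hv0]
  rw [degree_neg, degree_paramSpec_f hv0, degree_paramSpec_g_of_eq_zero hv1]
  exact Lex.single_lt_iff.2 (by decide)

theorem paramSpec_h_of_eq_zero {v : Fin 2 → L} (hv0 : v 0 = 0) (hv1 : v 1 = 0) :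
    paramSpec v (h K) = 1 := by
  simp [paramSpec_h, paramSpec_f, paramSpec_g, hv0, hv1]

theorem isGroebnerBasis_paramSpec (v : Fin 2 → L) :
    IsGroebnerBasis m3 ((I K).map (paramSpec v)) (paramSpec v '' {f K, g K, h K}) := by
  have hH : paramSpec v '' {f K, g K, h K} ⊆ (I K).map (paramSpec v) :=
    Set.image_subset_iff.2 fun _ hq => Ideal.mem_map_of_mem _ (fgh_subset_I hq)
  have hf : paramSpec v (f K) ∈ paramSpec v '' {f K, g K, h K} := ⟨f K, by simp, rfl⟩
  have hg : paramSpec v (g K) ∈ paramSpec v '' {f K, g K, h K} := ⟨g K, by simp, rfl⟩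
  have hh : paramSpec v (h K) ∈ paramSpec v '' {f K, g K, h K} := ⟨h K, by simp, rfl⟩
  by_cases ha : v 0 = 0 <;> by_cases hb : v 1 = 0
  · exact isGroebnerBasis_of_one_mem hH (paramSpec_h_of_eq_zero (K := K) ha hb ▸ hh)
  · refine isGroebnerBasis_lex_of_le_ker_aeval hH (i := 1)
      (x := ![Polynomial.C (-(v 1)⁻¹), Polynomial.X, 0]) rfl ?_
      (map_paramSpec_I_le_ker_aeval ?_ ?_) ?_
    · intro j hj
      fin_cases j <;> simp at hj ⊢
      exact ⟨0, by simp⟩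
    · simp [paramSpec_f, ha]
    · simp [paramSpec_g, ← Polynomial.C_mul, hb]
    · intro j hj
      fin_cases j
      exacts [⟨_, hg, degree_paramSpec_g hb⟩, absurd rfl hj,
        ⟨_, hf, degree_paramSpec_f_of_eq_zero ha⟩]
  · refine isGroebnerBasis_lex_of_le_ker_aeval hH (i := 0)
      (x := ![Polynomial.X, Polynomial.C (v 0)⁻¹, -1]) rfl ?_
      (map_paramSpec_I_le_ker_aeval ?_ ?_) ?_
    · intro j hj
      fin_cases j <;> simp at hj ⊢
      exact ⟨-1, by simp⟩
    · simp [paramSpec_f, ← Polynomial.C_mul, ha]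
    · simp [paramSpec_g, hb]
    · intro j hj
      fin_cases j
      exacts [absurd rfl hj, ⟨_, hf, degree_paramSpec_f ha⟩,
        ⟨_, hg, degree_paramSpec_g_of_eq_zero hb⟩]
  · refine isGroebnerBasis_lex_of_le_ker_aeval hH (i := 2)
      (x := ![-(Polynomial.C (v 1)⁻¹ * (Polynomial.X + 1)),
        -(Polynomial.C (v 0)⁻¹ * Polynomial.X), Polynomial.X]) rfl ?_
      (map_paramSpec_I_le_ker_aeval ?_ ?_) ?_
    · intro j hj
      fin_cases j <;> simp at hj
    · simp [paramSpec_f, ← mul_assoc, ← Polynomial.C_mul, ha]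
    · simp [paramSpec_g, ← mul_assoc, ← Polynomial.C_mul, hb]
    · intro j hj
      fin_cases j
      exacts [⟨_, hg, degree_paramSpec_g hb⟩, ⟨_, hf, degree_paramSpec_f ha⟩,
        absurd rfl hj]

theorem isCGB_fgh : IsCGB L m3 (I K) {f K, g K, h K} :=
  ⟨Set.toFinite _, fgh_subset_I, isGroebnerBasis_paramSpec⟩

theorem not_isCGB_of_subset_fh {G : Set (MvPolynomial (Fin 3) (MvPolynomial (Fin 2) K))}
    (hG : G ⊆ {f K, h K}) : ¬ IsCGB L m3 (I K) G := by
  have hv0 : (![1, 0] : Fin 2 → L) 0 ≠ 0 := by simp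
  have hg := degree_paramSpec_g_of_eq_zero (K := K) (v := (![1, 0] : Fin 2 → L)) rfl
  refine not_isCGB_of_forall_not_degree_le g_mem_I ![1, 0]
    (ne_zero_of_degree_ne_zero (m := m3) (by simp [hg])) fun q hq => ?_
  rcases hG hq with rfl | rfl
  · simp [hg, degree_paramSpec_f hv0]
  · simp [hg, degree_paramSpec_h_of_eq_zero hv0 rfl]

theorem not_isCGB_of_subset_gh {G : Set (MvPolynomial (Fin 3) (MvPolynomial (Fin 2) K))}
    (hG : G ⊆ {g K, h K}) : ¬ IsCGB L m3 (I K) G := by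
  have hv1 : (![0, 1] : Fin 2 → L) 1 ≠ 0 := by simp
  have hf := degree_paramSpec_f_of_eq_zero (K := K) (v := (![0, 1] : Fin 2 → L)) rfl
  refine not_isCGB_of_forall_not_degree_le f_mem_I ![0, 1]
    (ne_zero_of_degree_ne_zero (m := m3) (by simp [hf])) fun q hq => ?_
  rcases hG hq with rfl | rfl
  · simp [hf, degree_paramSpec_g hv1]
  · simp [hf, degree_paramSpec_h hv1]

theorem not_isCGB_of_subset_fg {G : Set (MvPolynomial (Fin 3) (MvPolynomial (Fin 2) K))}
    (hG : G ⊆ {f K, g K}) : ¬ IsCGB L m3 (I K) G := by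
  have hh := paramSpec_h_of_eq_zero (K := K) (v := (![0, 0] : Fin 2 → L)) rfl rfl
  refine not_isCGB_of_forall_not_degree_le h_mem_I ![0, 0] (by simp [hh]) fun q hq => ?_
  rcases hG hq with rfl | rfl
  · simp [hh, degree_paramSpec_f_of_eq_zero (v := (![0, 0] : Fin 2 → L)) rfl]
  · simp [hh, degree_paramSpec_g_of_eq_zero (v := (![0, 0] : Fin 2 → L)) rfl]

end Weispfenning

open Weispfenning in
theorem weispfenning_fh_not_CGB_and_fgh_minimal_general
    {K L : Type*} [Field K] [Field L] [Algebra K L] :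
    paramSpec (L := L) (![1, 0] : Fin 2 → L) (g K) ∈
        (I K).map (paramSpec (L := L) (![1, 0] : Fin 2 → L)) ∧
    paramSpec (L := L) (![1, 0] : Fin 2 → L) (g K) ≠ 0 ∧
    mdeg m3 (paramSpec (L := L) (![1, 0] : Fin 2 → L) (g K)) =
      Finsupp.single (2 : Fin 3) 1 ∧
    mdeg m3 (paramSpec (L := L) (![1, 0] : Fin 2 → L) (f K)) =
      Finsupp.single (1 : Fin 3) 1 ∧
    mdeg m3 (paramSpec (L := L) (![1, 0] : Fin 2 → L) (h K)) =
      Finsupp.single (1 : Fin 3) 1 ∧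
    ¬ (Finsupp.single (1 : Fin 3) 1 ≤ Finsupp.single (2 : Fin 3) 1) ∧
    ¬ IsCGB L m3 (I K) {f K, h K} ∧
    (IsCGB L m3 (I K) {f K, g K, h K} ∧
      ∀ G' ⊂ ({f K, g K, h K} : Set (MvPolynomial (Fin 3) (MvPolynomial (Fin 2) K))),
        ¬ IsCGB L m3 (I K) G') := by
  have hg : m3.degree (paramSpec (![1, 0] : Fin 2 → L) (g K)) = single 2 1 :=
    degree_paramSpec_g_of_eq_zero rfl
  refine ⟨Ideal.mem_map_of_mem _ g_mem_I, ne_zero_of_degree_ne_zero (m := m3) (by simp [hg]), hg,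
    degree_paramSpec_f (by simp), degree_paramSpec_h_of_eq_zero (by simp) rfl, by simp,
    not_isCGB_of_subset_fh subset_rfl, isCGB_fgh, fun G' hG' => ?_⟩
  obtain ⟨w, hw, hwG'⟩ := Set.exists_of_ssubset hG'
  rcases hw with rfl | rfl | rfl
  · exact not_isCGB_of_subset_gh fun q hq => by rcases hG'.1 hq with rfl | rfl | rfl <;> simp_all
  · exact not_isCGB_of_subset_fh fun q hq => by rcases hG'.1 hq with rfl | rfl | rfl <;> simp_all
  · exact not_isCGB_of_subset_fg fun q hq => by rcases hG'.1 hq with rfl | rfl | rfl <;> simp_all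

open Weispfenning in
/-- At `u ↦ 1, v ↦ 0`, `σ(g) = x + 1` has leading monomial `x`, while `σ(f)` and `σ(h)`
have leading monomial `y`, which does not divide `x`; hence `{f, h}` is not a CGB of `I`,
so `g` is essential in the CGB `{f, g, h}`; combined with the essentiality of `f` and `h`,
`{f, g, h}` is a minimal CGB of `I` (no proper subset is a CGB). -/
theorem weispfenning_fh_not_CGB_and_fgh_minimal
    {K L : Type*} [Field K] [Field L] [Algebra K L] [IsAlgClosed L] :
    paramSpec (L := L) (![1, 0] : Fin 2 → L) (g K) ∈
        (I K).map (paramSpec (L := L) (![1, 0] : Fin 2 → L)) ∧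
    paramSpec (L := L) (![1, 0] : Fin 2 → L) (g K) ≠ 0 ∧
    mdeg m3 (paramSpec (L := L) (![1, 0] : Fin 2 → L) (g K)) =
      Finsupp.single (2 : Fin 3) 1 ∧
    mdeg m3 (paramSpec (L := L) (![1, 0] : Fin 2 → L) (f K)) =
      Finsupp.single (1 : Fin 3) 1 ∧
    mdeg m3 (paramSpec (L := L) (![1, 0] : Fin 2 → L) (h K)) =
      Finsupp.single (1 : Fin 3) 1 ∧
    ¬ (Finsupp.single (1 : Fin 3) 1 ≤ Finsupp.single (2 : Fin 3) 1) ∧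
    ¬ IsCGB L m3 (I K) {f K, h K} ∧
    (IsCGB L m3 (I K) {f K, g K, h K} ∧
      ∀ G' ⊂ ({f K, g K, h K} : Set (MvPolynomial (Fin 3) (MvPolynomial (Fin 2) K))),
        ¬ IsCGB L m3 (I K) G') :=
  weispfenning_fh_not_CGB_and_fgh_minimal_general
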